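/- For every integer n ≥ 2, m_{2n+1} = 2n − M_{n+1}, where m_k (resp. M_k) is the minimum (resp. maximum) number of alternations among length-k factors of the Thue–Morse sequence. -/

import Mathlib

/-- The reduction of a word: replace each maximal run of identical characters
by a single character. -/
def red {α : Type*} [DecidableEq α] (w : List α) : List α :=
  w.destutter (· ≠ ·)

/-- The length-`k` factor of the infinite sequence `x` (1-indexed) starting at
position `i`. -/
def factorAt {α : Type*} (x : ℕ → α) (i k : ℕ) : List α :=
  (List.range k).map (fun j => x (i + j))

/-- The reduced factor complexity: the number of length-`n` factors of `x`,
counted up to reduced-equivalence (`red v = red w`). -/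
noncomputable def redFactorComplexity {α : Type*} [DecidableEq α]
    (x : ℕ → α) (n : ℕ) : ℕ :=
  Set.ncard { u : List α | ∃ i ≥ 1, u = red (factorAt x i n) }

/-- The Thue–Morse sequence (1-indexed): `t n` is the parity of the number of
1's in the binary expansion of `n - 1`. -/
def thueMorse (n : ℕ) : Bool :=
  decide ((Nat.digits 2 (n - 1)).sum % 2 = 1)

/-- The number of alternations (occurrences of 01 or 10) in a binary word. -/
def alt (w : List Bool) : ℕ :=
  (List.zipWith (fun a b => a != b) w w.tail).count true

/-- The minimum number of alternations among length-`k` factors of Thue–Morse. -/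
noncomputable def tmAltMin (k : ℕ) : ℕ :=
  sInf { a : ℕ | ∃ i ≥ 1, a = alt (factorAt thueMorse i k) }

/-- The maximum number of alternations among length-`k` factors of Thue–Morse. -/
noncomputable def tmAltMax (k : ℕ) : ℕ :=
  sSup { a : ℕ | ∃ i ≥ 1, a = alt (factorAt thueMorse i k) }

/-- The Thue–Morse morphism `0 → 01`, `1 → 10`. -/
def mu (w : List Bool) : List Bool :=
  w.flatMap (fun b => if b then [true, false] else [false, true])

/-- The regular paperfolding sequence (1-indexed): writing `n = n' * 2^k` with
`n'` odd, `f n = 1` iff `n' ≡ 3 (mod 4)`. -/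
def paperfold (n : ℕ) : Bool :=
  decide ((n / 2 ^ (n.factorization 2)) % 4 = 3)

/-- The reduced abelian complexity: the number of length-`n` factors of `x`,
counted up to the equivalence identifying `v` and `w` whenever `red v` is a
rearrangement of the characters of `red w`. -/
noncomputable def redAbelianComplexity {α : Type*} [DecidableEq α]
    (x : ℕ → α) (n : ℕ) : ℕ :=
  Set.ncard { m : Multiset α | ∃ i ≥ 1, m = ↑(red (factorAt x i n)) }

/-!
Every factor of `t` of odd length `2n + 1` is `μ(u)` with its first or its last letter removed,
for a factor `u` of length `n + 1`. Inside `μ(u)` each block `μ(a)` alternates, and the junction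
`μ(a)μ(b)` alternates exactly when `a = b`; so `alt μ(u) = 2|u| - 1 - alt u`, and cutting an end
letter off `μ(u)` loses one more alternation. Hence the factors of length `2n + 1` have exactly
the alternation counts `2n - alt u`, and the minimum of these is `2n - M_{n+1}`.
-/

lemma alt_cons_cons (a b : Bool) (l : List Bool) :
    alt (a :: b :: l) = (if a ≠ b then 1 else 0) + alt (b :: l) := by
  cases a <;> cases b <;> simp [alt, Nat.add_comm]

lemma alt_append_pair (l : List Bool) (a b : Bool) :
    alt (l ++ [a, b]) = alt (l ++ [a]) + if a ≠ b then 1 else 0 := by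
  induction l with
  | nil => cases a <;> cases b <;> rfl
  | cons c l ih =>
    cases l with
    | nil => simp only [List.nil_append, List.cons_append, alt_cons_cons]; rfl
    | cons d l =>
      simp only [List.cons_append] at ih ⊢
      rw [alt_cons_cons, alt_cons_cons, ih, Nat.add_assoc]

lemma alt_le_length_sub_one (w : List Bool) : alt w ≤ w.length - 1 := by
  refine List.count_le_length.trans ?_
  simp

lemma mu_cons (b : Bool) (u : List Bool) : mu (b :: u) = b :: (!b) :: mu u := by
  cases b <;> rfl

lemma mu_concat (u : List Bool) (c : Bool) : mu (u ++ [c]) = mu u ++ [c, !c] := by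
  cases c <;> simp [mu]

lemma alt_mu_add_alt (a : Bool) (u : List Bool) :
    alt (mu (a :: u)) + alt (a :: u) + 1 = 2 * (a :: u).length := by
  induction u generalizing a with
  | nil => cases a <;> rfl
  | cons b l ih =>
    have hjunction : ((if (!a) ≠ b then 1 else 0) + if a ≠ b then 1 else 0) = 1 := by
      cases a <;> cases b <;> rfl
    have h := ih b
    rw [mu_cons] at h
    rw [mu_cons, mu_cons, alt_cons_cons a, alt_cons_cons (!a), alt_cons_cons a b,
      if_pos (Bool.not_ne_self a).symm, List.length_cons]
    omega

lemma alt_tail_mu_add_one {u : List Bool} (hu : u ≠ []) : alt (mu u).tail + 1 = alt (mu u) := by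
  obtain ⟨a, v, rfl⟩ := List.exists_cons_of_ne_nil hu
  rw [mu_cons, alt_cons_cons]
  simp [Nat.add_comm]

lemma alt_dropLast_mu_add_one {u : List Bool} (hu : u ≠ []) :
    alt (mu u).dropLast + 1 = alt (mu u) := by
  rw [← List.dropLast_append_getLast hu, mu_concat,
    show mu u.dropLast ++ [u.getLast hu, !u.getLast hu]
      = (mu u.dropLast ++ [u.getLast hu]) ++ [!u.getLast hu] by simp,
    List.dropLast_concat, List.append_assoc, List.singleton_append, alt_append_pair]
  simp

lemma factorAt_succ_eq_cons {α : Type*} (x : ℕ → α) (i k : ℕ) :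
    factorAt x i (k + 1) = x i :: factorAt x (i + 1) k := by
  simp [factorAt, List.range_succ_eq_map, Nat.add_assoc, Nat.add_comm 1]

lemma factorAt_succ_eq_append {α : Type*} (x : ℕ → α) (i k : ℕ) :
    factorAt x i (k + 1) = factorAt x i k ++ [x (i + k)] := by
  simp [factorAt, List.range_succ]

lemma length_factorAt {α : Type*} (x : ℕ → α) (i k : ℕ) : (factorAt x i k).length = k := by
  simp [factorAt]

lemma thueMorse_two_mul_add_one (j : ℕ) : thueMorse (2 * j + 1) = thueMorse (j + 1) := by
  rcases Nat.eq_zero_or_pos j with rfl | hj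
  · rfl
  · simp [thueMorse, Nat.digits_base_mul one_lt_two hj]

lemma thueMorse_two_mul_add_two (j : ℕ) : thueMorse (2 * j + 2) = !thueMorse (j + 1) := by
  have hdigits : Nat.digits 2 (2 * j + 1) = 1 :: Nat.digits 2 j := by
    rw [Nat.digits_def' one_lt_two (by omega), Nat.mul_add_mod_self_left,
      Nat.mul_add_div two_pos, Nat.div_eq_of_lt one_lt_two, Nat.add_zero]
  simp only [thueMorse, Nat.add_succ_sub_one, Nat.add_sub_cancel, hdigits, List.sum_cons]
  cases Nat.mod_two_eq_zero_or_one (Nat.digits 2 j).sum <;> simp [Nat.add_mod, *]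

lemma factorAt_thueMorse_two_mul (j k : ℕ) :
    factorAt thueMorse (2 * j + 1) (2 * k) = mu (factorAt thueMorse (j + 1) k) := by
  induction k generalizing j with
  | zero => rfl
  | succ k ih =>
    rw [Nat.mul_succ, factorAt_succ_eq_cons, factorAt_succ_eq_cons, factorAt_succ_eq_cons,
      mu_cons, thueMorse_two_mul_add_one, show 2 * j + 1 + 1 = 2 * j + 2 by rfl, thueMorse_two_mul_add_two,
      show 2 * j + 2 + 1 = 2 * (j + 1) + 1 by ring, ih]

lemma alt_factorAt_thueMorse_add_alt_half (n : ℕ) {i : ℕ} (hi : 1 ≤ i) :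
    alt (factorAt thueMorse i (2 * n + 1)) + alt (factorAt thueMorse ((i + 1) / 2) (n + 1))
      = 2 * n := by
  obtain ⟨j, hj⟩ : ∃ j, i = 2 * j + 1 ∨ i = 2 * j + 2 := ⟨(i - 1) / 2, by omega⟩
  rw [show (i + 1) / 2 = j + 1 by omega]
  set u := factorAt thueMorse (j + 1) (n + 1) with hu
  have hu_ne : u ≠ [] := by simp [hu, factorAt_succ_eq_cons]
  have hmu : mu u = factorAt thueMorse (2 * j + 1) (2 * n + 1 + 1) := by
    rw [hu, ← factorAt_thueMorse_two_mul, Nat.mul_succ]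
  have halt : alt (mu u) + alt u + 1 = 2 * (n + 1) := by
    rw [hu, factorAt_succ_eq_cons, alt_mu_add_alt, List.length_cons, length_factorAt]
  rcases hj with rfl | rfl
  · have hdrop : factorAt thueMorse (2 * j + 1) (2 * n + 1) = (mu u).dropLast := by
      rw [hmu, factorAt_succ_eq_append _ _ (2 * n + 1), List.dropLast_concat]
    have := alt_dropLast_mu_add_one hu_ne
    rw [hdrop]
    omega
  · have htail : factorAt thueMorse (2 * j + 2) (2 * n + 1) = (mu u).tail := by
      rw [hmu, factorAt_succ_eq_cons _ _ (2 * n + 1), List.tail_cons]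
    have := alt_tail_mu_add_one hu_ne
    rw [htail]
    omega

lemma Nat.sInf_image_tsub {S : Set ℕ} {N : ℕ} (hS : S.Nonempty) (hN : ∀ a ∈ S, a ≤ N) :
    sInf ((N - ·) '' S) = N - sSup S := by
  have hbdd : BddAbove S := ⟨N, hN⟩
  refine le_antisymm (Nat.sInf_le ⟨_, Nat.sSup_mem hS hbdd, rfl⟩) ?_
  refine le_csInf (hS.image _) ?_
  rintro _ ⟨a, ha, rfl⟩
  exact Nat.sub_le_sub_left (le_csSup hbdd ha) N

def tmAlts (k : ℕ) : Set ℕ :=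
  { a : ℕ | ∃ i ≥ 1, a = alt (factorAt thueMorse i k) }

lemma tmAlts_two_mul_add_one (n : ℕ) : tmAlts (2 * n + 1) = (2 * n - ·) '' tmAlts (n + 1) := by
  ext a
  constructor
  · rintro ⟨i, hi, rfl⟩
    have := alt_factorAt_thueMorse_add_alt_half n hi
    exact ⟨_, ⟨(i + 1) / 2, by omega, rfl⟩, by dsimp only; omega⟩
  · rintro ⟨_, ⟨i, hi, rfl⟩, rfl⟩
    have := alt_factorAt_thueMorse_add_alt_half n (i := 2 * i - 1) (by omega)
    rw [show (2 * i - 1 + 1) / 2 = i by omega] at this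
    exact ⟨2 * i - 1, by omega, by dsimp only; omega⟩

theorem stmt4_general (n : ℕ) :
    tmAltMin (2 * n + 1) = 2 * n - tmAltMax (n + 1) := by
  have hbound : ∀ a ∈ tmAlts (n + 1), a ≤ 2 * n := by
    rintro _ ⟨i, -, rfl⟩
    have := alt_le_length_sub_one (factorAt thueMorse i (n + 1))
    rw [length_factorAt] at this
    omega
  have hne : (tmAlts (n + 1)).Nonempty := ⟨_, 1, le_rfl, rfl⟩
  change sInf (tmAlts (2 * n + 1)) = 2 * n - sSup (tmAlts (n + 1))
  rw [tmAlts_two_mul_add_one, Nat.sInf_image_tsub hne hbound]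

theorem stmt4 (n : ℕ) (hn : 2 ≤ n) :
    tmAltMin (2 * n + 1) = 2 * n - tmAltMax (n + 1) :=
  stmt4_general n
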